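/- arXiv:1804.06040 — 3 statements merged into one kernel-verified Lean document; each statement's English description precedes it below -/
import Mathlib

section
/- Let d ≥ 5. The set X consisting of the zero vector together with all coordinate permutations of (1,1,1,−1,0,...,0) in R^{d+1} has cardinality 1 + (d−2)·binomial(d+1,3), and the set of pairwise Euclidean distances between distinct elements of X has cardinality 6. -/
/-!
The nonzero points of `X` are the vectors `x_{B,b} = 1_B - e_b` with `|B| = 3` and `b ∉ B`:
permutations act transitively on these pairs because two functions with level sets of equal
sizes differ by a permutation, and `(B, b)` is read back from the level sets `{1}` and `{-1}`,
which gives `binom(d+1, 3) * (d - 2)` of them. Since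
`⟪x_{B,b}, x_{B',b'}⟫ = |B ∩ B'| - [b ∈ B'] - [b' ∈ B] + [b = b'] =: m` is an integer at least
`-2`, and `‖x_{B,b} - x_{B',b'}‖² = 8 - 2m` is positive for distinct points, the distances are
`√(8 - 2m)` with `-2 ≤ m ≤ 3`; the origin is at distance `2 = √(8 - 2 * 2)` from all of them.
All six values of `m` already occur on six coordinates.
-/

open Finset RealInnerProductSpace

theorem Equiv.Perm.exists_comp_eq_of_card_fiber {α β : Type*} [Fintype α] [DecidableEq β]
    {f g : α → β} (h : ∀ c, #{a | f a = c} = #{a | g a = c}) :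
    ∃ σ : Equiv.Perm α, f ∘ σ = g := by
  have e : ∀ c, {a // g a = c} ≃ {a // f a = c} := fun c =>
    Fintype.equivOfCardEq (by simp only [Fintype.card_subtype, h])
  exact ⟨Equiv.ofFiberEquiv e, funext (Equiv.ofFiberEquiv_map e)⟩

section

variable {ι : Type*} [DecidableEq ι]

noncomputable def indicatorSubSingle (B : Finset ι) (b : ι) : EuclideanSpace ℝ ι :=
  WithLp.toLp 2 fun i => (if i ∈ B then 1 else 0) - (if i = b then 1 else 0)

@[simp]
lemma indicatorSubSingle_apply (B : Finset ι) (b i : ι) :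
    indicatorSubSingle B b i = (if i ∈ B then 1 else 0) - (if i = b then 1 else 0) := rfl

lemma indicatorSubSingle_comp_perm (B : Finset ι) (b : ι) (σ : Equiv.Perm ι) :
    indicatorSubSingle B b ∘ σ = indicatorSubSingle (B.map σ.symm.toEmbedding) (σ.symm b) := by
  ext i
  simp [Equiv.eq_symm_apply]

def signedOverlap (B B' : Finset ι) (b b' : ι) : ℤ :=
  #(B ∩ B') - (if b ∈ B' then 1 else 0) - (if b' ∈ B then 1 else 0) + (if b = b' then 1 else 0)

lemma signedOverlap_map {κ : Type*} [DecidableEq κ] (f : κ ↪ ι) (B B' : Finset κ) (b b' : κ) :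
    signedOverlap (B.map f) (B'.map f) (f b) (f b') = signedOverlap B B' b b' := by
  simp [signedOverlap, ← map_inter]

lemma neg_two_le_signedOverlap (B B' : Finset ι) (b b' : ι) : -2 ≤ signedOverlap B B' b b' := by
  unfold signedOverlap
  split_ifs <;> omega

variable [Fintype ι]

lemma filter_indicatorSubSingle_eq {B : Finset ι} {b : ι} (hb : b ∉ B) (r : ℝ) :
    ({i | indicatorSubSingle B b i = r} : Finset ι) =
      if r = 1 then B else if r = -1 then {b} else if r = 0 then (insert b B)ᶜ else ∅ := by
  ext i
  by_cases hi : i ∈ B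
  · have : i ≠ b := by rintro rfl; exact hb hi
    split_ifs <;> simp_all <;> grind
  · by_cases hib : i = b <;> split_ifs <;> simp_all <;> grind

lemma exists_perm_indicatorSubSingle_comp_eq {B B' : Finset ι} {b b' : ι} (hb : b ∉ B)
    (hb' : b' ∉ B') (hcard : #B = #B') :
    ∃ σ : Equiv.Perm ι, indicatorSubSingle B b ∘ σ = indicatorSubSingle B' b' :=
  Equiv.Perm.exists_comp_eq_of_card_fiber fun r => by
    rw [filter_indicatorSubSingle_eq hb, filter_indicatorSubSingle_eq hb']
    split_ifs <;> simp [card_compl, hb, hb', hcard]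

lemma indicatorSubSingle_inj {B B' : Finset ι} {b b' : ι} (hb : b ∉ B) (hb' : b' ∉ B') :
    indicatorSubSingle B b = indicatorSubSingle B' b' ↔ B = B' ∧ b = b' := by
  refine ⟨fun h => ?_, by rintro ⟨rfl, rfl⟩; rfl⟩
  have h1 := filter_indicatorSubSingle_eq hb 1
  have hm1 := filter_indicatorSubSingle_eq hb (-1)
  rw [h, filter_indicatorSubSingle_eq hb'] at h1 hm1
  norm_num at h1 hm1
  exact ⟨h1.symm, hm1.symm⟩

lemma inner_indicatorSubSingle (B B' : Finset ι) (b b' : ι) :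
    ⟪indicatorSubSingle B b, indicatorSubSingle B' b'⟫ = signedOverlap B B' b b' := by
  simp [PiLp.inner_apply, signedOverlap, mul_sub, sum_sub_distrib, mul_ite, sum_ite_eq']
  ring

lemma norm_indicatorSubSingle_sq {B : Finset ι} {b : ι} (hb : b ∉ B) :
    ‖indicatorSubSingle B b‖ ^ 2 = #B + 1 := by
  rw [← real_inner_self_eq_norm_sq, inner_indicatorSubSingle]
  simp [signedOverlap, hb]

lemma norm_indicatorSubSingle {B : Finset ι} {b : ι} (hb : b ∉ B) :
    ‖indicatorSubSingle B b‖ = √(#B + 1) := by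
  rw [← norm_indicatorSubSingle_sq hb, Real.sqrt_sq (norm_nonneg _)]

lemma dist_indicatorSubSingle {B B' : Finset ι} {b b' : ι} {k : ℕ} (hb : b ∉ B) (hb' : b' ∉ B')
    (hB : #B = k) (hB' : #B' = k) :
    dist (indicatorSubSingle B b) (indicatorSubSingle B' b') =
      √(2 * (k + 1) - 2 * signedOverlap B B' b b') := by
  rw [dist_eq_norm, ← Real.sqrt_sq (norm_nonneg _), norm_sub_sq_real, norm_indicatorSubSingle_sq hb,
    norm_indicatorSubSingle_sq hb', inner_indicatorSubSingle, hB, hB']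
  ring_nf

variable (ι) in
def subsetsWithOutsidePoint (k : ℕ) : Finset (Σ _ : Finset ι, ι) :=
  (univ.powersetCard k).sigma fun B => Bᶜ

@[simp]
lemma mem_subsetsWithOutsidePoint {k : ℕ} {p : Σ _ : Finset ι, ι} :
    p ∈ subsetsWithOutsidePoint ι k ↔ #p.1 = k ∧ p.2 ∉ p.1 := by
  simp [subsetsWithOutsidePoint]

lemma card_subsetsWithOutsidePoint (k : ℕ) :
    #(subsetsWithOutsidePoint ι k) = (Fintype.card ι).choose k * (Fintype.card ι - k) := by
  rw [subsetsWithOutsidePoint, card_sigma, sum_const_nat fun B hB => by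
    rw [card_compl, (mem_powersetCard.1 hB).2], card_powersetCard, card_univ]

variable (ι) in
def indicatorSubSingles (k : ℕ) : Set (EuclideanSpace ℝ ι) :=
  Sigma.uncurry indicatorSubSingle '' subsetsWithOutsidePoint ι k

lemma mem_indicatorSubSingles {k : ℕ} {x : EuclideanSpace ℝ ι} :
    x ∈ indicatorSubSingles ι k ↔ ∃ B b, #B = k ∧ b ∉ B ∧ indicatorSubSingle B b = x := by
  simp [indicatorSubSingles, Sigma.uncurry, and_assoc]

lemma indicatorSubSingle_mem_indicatorSubSingles {B : Finset ι} {b : ι} (hb : b ∉ B) :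
    indicatorSubSingle B b ∈ indicatorSubSingles ι #B :=
  mem_indicatorSubSingles.2 ⟨B, b, rfl, hb, rfl⟩

lemma setOf_exists_perm_eq_indicatorSubSingles {B₀ : Finset ι} {b₀ : ι} (hb₀ : b₀ ∉ B₀) :
    {x : EuclideanSpace ℝ ι | ∃ σ : Equiv.Perm ι, ∀ i, x i = indicatorSubSingle B₀ b₀ (σ i)} =
      indicatorSubSingles ι #B₀ := by
  ext x
  rw [mem_indicatorSubSingles]
  constructor
  · rintro ⟨σ, hσ⟩
    refine ⟨B₀.map σ.symm.toEmbedding, σ.symm b₀, card_map _, by simpa using hb₀, ?_⟩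
    ext i
    exact ((hσ i).trans (congrFun (indicatorSubSingle_comp_perm B₀ b₀ σ) i)).symm
  · rintro ⟨B, b, hB, hb, rfl⟩
    obtain ⟨σ, hσ⟩ := exists_perm_indicatorSubSingle_comp_eq hb₀ hb hB.symm
    exact ⟨σ, fun i => (congrFun hσ i).symm⟩

lemma ncard_indicatorSubSingles (k : ℕ) :
    (indicatorSubSingles ι k).ncard = (Fintype.card ι).choose k * (Fintype.card ι - k) := by
  have hinj : Set.InjOn (Sigma.uncurry (indicatorSubSingle (ι := ι)))
      (subsetsWithOutsidePoint ι k) := by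
    rintro ⟨B, b⟩ hp ⟨B', b'⟩ hp' h
    obtain ⟨rfl, rfl⟩ := (indicatorSubSingle_inj (mem_subsetsWithOutsidePoint.1 hp).2
      (mem_subsetsWithOutsidePoint.1 hp').2).1 h
    rfl
  rw [indicatorSubSingles, hinj.ncard_image, Set.ncard_coe_finset, card_subsetsWithOutsidePoint]

lemma zero_notMem_indicatorSubSingles (k : ℕ) :
    (0 : EuclideanSpace ℝ ι) ∉ indicatorSubSingles ι k := by
  rw [mem_indicatorSubSingles]
  rintro ⟨B, b, -, hb, h⟩
  have := norm_indicatorSubSingle_sq hb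
  rw [h, norm_zero, zero_pow two_ne_zero] at this
  exact Nat.cast_add_one_ne_zero _ this.symm

lemma ncard_insert_zero_indicatorSubSingles (k : ℕ) :
    (insert 0 (indicatorSubSingles ι k)).ncard
      = 1 + (Fintype.card ι).choose k * (Fintype.card ι - k) := by
  rw [Set.ncard_insert_of_notMem (zero_notMem_indicatorSubSingles k)
    ((subsetsWithOutsidePoint ι k).finite_toSet.image _), ncard_indicatorSubSingles, add_comm]

lemma exists_dist_indicatorSubSingle_eq {B B' : Finset ι} {b b' : ι} {k : ℕ} (hb : b ∉ B)
    (hb' : b' ∉ B') (hB : #B = k) (hB' : #B' = k)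
    (hne : indicatorSubSingle B b ≠ indicatorSubSingle B' b') :
    ∃ m : ℤ, -2 ≤ m ∧ m ≤ k ∧
      dist (indicatorSubSingle B b) (indicatorSubSingle B' b') = √(2 * (k + 1) - 2 * m) := by
  have hdist := dist_indicatorSubSingle hb hb' hB hB'
  refine ⟨_, neg_two_le_signedOverlap _ _ _ _, ?_, hdist⟩
  have hpos := dist_pos.2 hne
  rw [hdist, Real.sqrt_pos] at hpos
  have : (signedOverlap B B' b b' : ℝ) < k + 1 := by linarith
  exact Int.lt_add_one_iff.1 (by exact_mod_cast this)

lemma exists_signedOverlap_eq_fin_six {m : ℤ} (hm : m ∈ Set.Icc (-2) 3) :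
    ∃ p ∈ subsetsWithOutsidePoint (Fin 6) 3, ∃ q ∈ subsetsWithOutsidePoint (Fin 6) 3,
      signedOverlap p.1 q.1 p.2 q.2 = m := by
  obtain ⟨hlo, hhi⟩ := hm
  interval_cases m
  · exact ⟨⟨{3, 4, 5}, 0⟩, by decide, ⟨{0, 1, 2}, 3⟩, by decide, by decide⟩
  · exact ⟨⟨{0, 3, 4}, 1⟩, by decide, ⟨{0, 1, 2}, 3⟩, by decide, by decide⟩
  · exact ⟨⟨{0, 4, 5}, 1⟩, by decide, ⟨{0, 1, 2}, 3⟩, by decide, by decide⟩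
  · exact ⟨⟨{0, 1, 3}, 4⟩, by decide, ⟨{0, 1, 2}, 3⟩, by decide, by decide⟩
  · exact ⟨⟨{0, 1, 4}, 5⟩, by decide, ⟨{0, 1, 2}, 3⟩, by decide, by decide⟩
  · exact ⟨⟨{0, 1, 2}, 4⟩, by decide, ⟨{0, 1, 2}, 3⟩, by decide, by decide⟩

lemma exists_signedOverlap_eq (h6 : 6 ≤ Fintype.card ι) {m : ℤ} (hm : m ∈ Set.Icc (-2) 3) :
    ∃ p ∈ subsetsWithOutsidePoint ι 3, ∃ q ∈ subsetsWithOutsidePoint ι 3,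
      signedOverlap p.1 q.1 p.2 q.2 = m := by
  obtain ⟨f⟩ := Function.Embedding.nonempty_of_card_le (α := Fin 6) (β := ι) (by simpa using h6)
  obtain ⟨⟨B, b⟩, hp, ⟨B', b'⟩, hq, h⟩ := exists_signedOverlap_eq_fin_six hm
  rw [mem_subsetsWithOutsidePoint] at hp hq
  exact ⟨⟨B.map f, f b⟩, by simpa using hp, ⟨B'.map f, f b'⟩, by simpa using hq,
    (signedOverlap_map f B B' b b').trans h⟩

lemma setOf_dist_insert_zero_indicatorSubSingles_eq (h6 : 6 ≤ Fintype.card ι) :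
    {r : ℝ | ∃ x ∈ insert 0 (indicatorSubSingles ι 3), ∃ y ∈ insert 0 (indicatorSubSingles ι 3),
      x ≠ y ∧ dist x y = r} = (fun m : ℤ => √(8 - 2 * m)) '' Set.Icc (-2) 3 := by
  have dist_zero {B : Finset ι} {b : ι} (hB : #B = 3) (hb : b ∉ B) :
      dist 0 (indicatorSubSingle B b) = √(8 - 2 * (2 : ℤ)) := by
    rw [dist_zero_left, norm_indicatorSubSingle hb, hB]
    norm_num
  ext r
  constructor
  · rintro ⟨x, hx, y, hy, hxy, rfl⟩
    simp only [Set.mem_insert_iff, mem_indicatorSubSingles] at hx hy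
    rcases hx with rfl | ⟨B, b, hB, hb, rfl⟩ <;> rcases hy with rfl | ⟨B', b', hB', hb', rfl⟩
    · exact absurd rfl hxy
    · exact ⟨2, by norm_num, (dist_zero hB' hb').symm⟩
    · exact ⟨2, by norm_num, by rw [dist_comm, dist_zero hB hb]⟩
    · obtain ⟨m, hlo, hhi, h⟩ := exists_dist_indicatorSubSingle_eq hb hb' hB hB' hxy
      refine ⟨m, ⟨hlo, by exact_mod_cast hhi⟩, ?_⟩
      rw [h]
      norm_num
  · rintro ⟨m, hm, rfl⟩
    obtain ⟨⟨B, b⟩, hp, ⟨B', b'⟩, hq, hBB'⟩ := exists_signedOverlap_eq h6 hm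
    rw [mem_subsetsWithOutsidePoint] at hp hq
    have h := dist_indicatorSubSingle hp.2 hq.2 hp.1 hq.1
    rw [hBB'] at h
    norm_num at h
    refine ⟨_, Or.inr (hp.1 ▸ indicatorSubSingle_mem_indicatorSubSingles hp.2), _,
      Or.inr (hq.1 ▸ indicatorSubSingle_mem_indicatorSubSingles hq.2), ?_, h⟩
    rw [← dist_pos, h, Real.sqrt_pos]
    have : (m : ℝ) ≤ 3 := by exact_mod_cast hm.2
    linarith

end

lemma ncard_image_sqrt_eight_sub_two_mul_Icc :
    ((fun m : ℤ => √(8 - 2 * m)) '' Set.Icc (-2) 3).ncard = 6 := by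
  have hinj : Set.InjOn (fun m : ℤ => √(8 - 2 * m)) (Set.Icc (-2) 3) := by
    intro m hm n hn h
    have hm3 : (m : ℝ) ≤ 3 := by exact_mod_cast hm.2
    have hn3 : (n : ℝ) ≤ 3 := by exact_mod_cast hn.2
    have := (Real.sqrt_inj (by linarith) (by linarith)).1 h
    exact_mod_cast (by linarith : (m : ℝ) = n)
  rw [hinj.ncard_image, ← coe_Icc, Set.ncard_coe_finset, Int.card_Icc]
  rfl

/-- For `d ≥ 5`, the zero vector together with all coordinate permutations of
`(1,1,1,−1,0,…,0)` in `ℝ^{d+1}` form a `1 + (d−2) * (d+1).choose 3`-element `6`-distance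
set. -/
theorem perm_three_ones_negOne_six_distance (d : ℕ) (hd : 5 ≤ d)
    (v : EuclideanSpace ℝ (Fin (d + 1)))
    (hv : ∀ i : Fin (d + 1), v i = if i.val < 3 then 1 else if i.val = 3 then -1 else 0)
    (X : Set (EuclideanSpace ℝ (Fin (d + 1))))
    (hX : X = insert 0 {x | ∃ σ : Equiv.Perm (Fin (d + 1)), ∀ i, x i = v (σ i)}) :
    X.ncard = 1 + (d - 2) * (d + 1).choose 3 ∧
      ({r : ℝ | ∃ x ∈ X, ∃ y ∈ X, x ≠ y ∧ dist x y = r}).ncard = 6 := by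
  set B₀ : Finset (Fin (d + 1)) := {i | i.val < 3}
  have hB₀ : #B₀ = 3 := by simp [B₀, Fin.card_filter_val_lt]; omega
  have hb₀ : (⟨3, by omega⟩ : Fin (d + 1)) ∉ B₀ := by simp [B₀]
  have hv₀ : v = indicatorSubSingle B₀ ⟨3, by omega⟩ := by
    ext i
    rw [hv, indicatorSubSingle_apply]
    simp only [B₀, mem_filter, mem_univ, true_and, Fin.ext_iff]
    split_ifs <;> first | omega | norm_num
  rw [hX, hv₀, setOf_exists_perm_eq_indicatorSubSingles hb₀, hB₀]
  refine ⟨?_, ?_⟩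
  · rw [ncard_insert_zero_indicatorSubSingles, Fintype.card_fin, show d + 1 - 3 = d - 2 by omega,
      mul_comm]
  · rw [setOf_dist_insert_zero_indicatorSubSingles_eq (by simp; omega),
      ncard_image_sqrt_eight_sub_two_mul_Icc]
end

section
/- The polynomial v⁶ − 11v⁵ + 45v⁴ − 84v³ + 70v² − 21v + 1 has sin²(π/13)/sin²(6π/13) as a root. -/
set_option maxHeartbeats 2000000 in
open Real in
/-- `sin²(π/13)/sin²(6π/13)` is a root of `v⁶ − 11v⁵ + 45v⁴ − 84v³ + 70v² − 21v + 1`. -/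
theorem sin_ratio_root :
    ∀ v : ℝ, v = sin (π / 13) ^ 2 / sin (6 * π / 13) ^ 2 →
      v ^ 6 - 11 * v ^ 5 + 45 * v ^ 4 - 84 * v ^ 3 + 70 * v ^ 2 - 21 * v + 1 = 0 := by
  intro v hv
  have key : ∀ A : ℝ, Real.cos (A + 2 * π / 13) = 2 * Real.cos (2 * π / 13) * Real.cos A - Real.cos (A - 2 * π / 13) := by
    intro A; rw [Real.cos_add, Real.cos_sub]; ring
  have h0 : Real.cos ((0:ℝ) * (2 * π / 13)) = 1 := by norm_num
  have h1 : Real.cos ((1:ℝ) * (2 * π / 13)) = Real.cos (2 * π / 13) := by norm_num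
  have h2 : Real.cos ((2:ℝ) * (2 * π / 13)) = (2) * Real.cos (2 * π / 13) ^ 2 + (-1) := by
    have h := key ((1:ℝ) * (2 * π / 13))
    rw [show (1:ℝ) * (2 * π / 13) + 2 * π / 13 = (2:ℝ) * (2 * π / 13) by ring,
        show (1:ℝ) * (2 * π / 13) - 2 * π / 13 = (0:ℝ) * (2 * π / 13) by ring, h1, h0] at h
    linear_combination h
  have h3 : Real.cos ((3:ℝ) * (2 * π / 13)) = (4) * Real.cos (2 * π / 13) ^ 3 + (-3) * Real.cos (2 * π / 13) := by
    have h := key ((2:ℝ) * (2 * π / 13))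
    rw [show (2:ℝ) * (2 * π / 13) + 2 * π / 13 = (3:ℝ) * (2 * π / 13) by ring,
        show (2:ℝ) * (2 * π / 13) - 2 * π / 13 = (1:ℝ) * (2 * π / 13) by ring, h2, h1] at h
    linear_combination h
  have h4 : Real.cos ((4:ℝ) * (2 * π / 13)) = (8) * Real.cos (2 * π / 13) ^ 4 + (-8) * Real.cos (2 * π / 13) ^ 2 + (1) := by
    have h := key ((3:ℝ) * (2 * π / 13))
    rw [show (3:ℝ) * (2 * π / 13) + 2 * π / 13 = (4:ℝ) * (2 * π / 13) by ring,
        show (3:ℝ) * (2 * π / 13) - 2 * π / 13 = (2:ℝ) * (2 * π / 13) by ring, h3, h2] at h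
    linear_combination h
  have h5 : Real.cos ((5:ℝ) * (2 * π / 13)) = (16) * Real.cos (2 * π / 13) ^ 5 + (-20) * Real.cos (2 * π / 13) ^ 3 + (5) * Real.cos (2 * π / 13) := by
    have h := key ((4:ℝ) * (2 * π / 13))
    rw [show (4:ℝ) * (2 * π / 13) + 2 * π / 13 = (5:ℝ) * (2 * π / 13) by ring,
        show (4:ℝ) * (2 * π / 13) - 2 * π / 13 = (3:ℝ) * (2 * π / 13) by ring, h4, h3] at h
    linear_combination h
  have h6 : Real.cos ((6:ℝ) * (2 * π / 13)) = (32) * Real.cos (2 * π / 13) ^ 6 + (-48) * Real.cos (2 * π / 13) ^ 4 + (18) * Real.cos (2 * π / 13) ^ 2 + (-1) := by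
    have h := key ((5:ℝ) * (2 * π / 13))
    rw [show (5:ℝ) * (2 * π / 13) + 2 * π / 13 = (6:ℝ) * (2 * π / 13) by ring,
        show (5:ℝ) * (2 * π / 13) - 2 * π / 13 = (4:ℝ) * (2 * π / 13) by ring, h5, h4] at h
    linear_combination h
  have h7 : Real.cos ((7:ℝ) * (2 * π / 13)) = (64) * Real.cos (2 * π / 13) ^ 7 + (-112) * Real.cos (2 * π / 13) ^ 5 + (56) * Real.cos (2 * π / 13) ^ 3 + (-7) * Real.cos (2 * π / 13) := by
    have h := key ((6:ℝ) * (2 * π / 13))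
    rw [show (6:ℝ) * (2 * π / 13) + 2 * π / 13 = (7:ℝ) * (2 * π / 13) by ring,
        show (6:ℝ) * (2 * π / 13) - 2 * π / 13 = (5:ℝ) * (2 * π / 13) by ring, h6, h5] at h
    linear_combination h
  have h8 : Real.cos ((8:ℝ) * (2 * π / 13)) = (128) * Real.cos (2 * π / 13) ^ 8 + (-256) * Real.cos (2 * π / 13) ^ 6 + (160) * Real.cos (2 * π / 13) ^ 4 + (-32) * Real.cos (2 * π / 13) ^ 2 + (1) := by
    have h := key ((7:ℝ) * (2 * π / 13))
    rw [show (7:ℝ) * (2 * π / 13) + 2 * π / 13 = (8:ℝ) * (2 * π / 13) by ring,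
        show (7:ℝ) * (2 * π / 13) - 2 * π / 13 = (6:ℝ) * (2 * π / 13) by ring, h7, h6] at h
    linear_combination h
  have h9 : Real.cos ((9:ℝ) * (2 * π / 13)) = (256) * Real.cos (2 * π / 13) ^ 9 + (-576) * Real.cos (2 * π / 13) ^ 7 + (432) * Real.cos (2 * π / 13) ^ 5 + (-120) * Real.cos (2 * π / 13) ^ 3 + (9) * Real.cos (2 * π / 13) := by
    have h := key ((8:ℝ) * (2 * π / 13))
    rw [show (8:ℝ) * (2 * π / 13) + 2 * π / 13 = (9:ℝ) * (2 * π / 13) by ring,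
        show (8:ℝ) * (2 * π / 13) - 2 * π / 13 = (7:ℝ) * (2 * π / 13) by ring, h8, h7] at h
    linear_combination h
  have h10 : Real.cos ((10:ℝ) * (2 * π / 13)) = (512) * Real.cos (2 * π / 13) ^ 10 + (-1280) * Real.cos (2 * π / 13) ^ 8 + (1120) * Real.cos (2 * π / 13) ^ 6 + (-400) * Real.cos (2 * π / 13) ^ 4 + (50) * Real.cos (2 * π / 13) ^ 2 + (-1) := by
    have h := key ((9:ℝ) * (2 * π / 13))
    rw [show (9:ℝ) * (2 * π / 13) + 2 * π / 13 = (10:ℝ) * (2 * π / 13) by ring,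
        show (9:ℝ) * (2 * π / 13) - 2 * π / 13 = (8:ℝ) * (2 * π / 13) by ring, h9, h8] at h
    linear_combination h
  have h11 : Real.cos ((11:ℝ) * (2 * π / 13)) = (1024) * Real.cos (2 * π / 13) ^ 11 + (-2816) * Real.cos (2 * π / 13) ^ 9 + (2816) * Real.cos (2 * π / 13) ^ 7 + (-1232) * Real.cos (2 * π / 13) ^ 5 + (220) * Real.cos (2 * π / 13) ^ 3 + (-11) * Real.cos (2 * π / 13) := by
    have h := key ((10:ℝ) * (2 * π / 13))
    rw [show (10:ℝ) * (2 * π / 13) + 2 * π / 13 = (11:ℝ) * (2 * π / 13) by ring,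
        show (10:ℝ) * (2 * π / 13) - 2 * π / 13 = (9:ℝ) * (2 * π / 13) by ring, h10, h9] at h
    linear_combination h
  have h12 : Real.cos ((12:ℝ) * (2 * π / 13)) = (2048) * Real.cos (2 * π / 13) ^ 12 + (-6144) * Real.cos (2 * π / 13) ^ 10 + (6912) * Real.cos (2 * π / 13) ^ 8 + (-3584) * Real.cos (2 * π / 13) ^ 6 + (840) * Real.cos (2 * π / 13) ^ 4 + (-72) * Real.cos (2 * π / 13) ^ 2 + (1) := by
    have h := key ((11:ℝ) * (2 * π / 13))
    rw [show (11:ℝ) * (2 * π / 13) + 2 * π / 13 = (12:ℝ) * (2 * π / 13) by ring,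
        show (11:ℝ) * (2 * π / 13) - 2 * π / 13 = (10:ℝ) * (2 * π / 13) by ring, h11, h10] at h
    linear_combination h
  have h13 : Real.cos ((13:ℝ) * (2 * π / 13)) = (4096) * Real.cos (2 * π / 13) ^ 13 + (-13312) * Real.cos (2 * π / 13) ^ 11 + (16640) * Real.cos (2 * π / 13) ^ 9 + (-9984) * Real.cos (2 * π / 13) ^ 7 + (2912) * Real.cos (2 * π / 13) ^ 5 + (-364) * Real.cos (2 * π / 13) ^ 3 + (13) * Real.cos (2 * π / 13) := by
    have h := key ((12:ℝ) * (2 * π / 13))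
    rw [show (12:ℝ) * (2 * π / 13) + 2 * π / 13 = (13:ℝ) * (2 * π / 13) by ring,
        show (12:ℝ) * (2 * π / 13) - 2 * π / 13 = (11:ℝ) * (2 * π / 13) by ring, h12, h11] at h
    linear_combination h
  have hone : Real.cos ((13:ℝ) * (2 * π / 13)) = 1 := by
    rw [show (13:ℝ) * (2 * π / 13) = 2 * π by ring, Real.cos_two_pi]
  have hP : (4096) * Real.cos (2 * π / 13) ^ 13 + (-13312) * Real.cos (2 * π / 13) ^ 11 + (16640) * Real.cos (2 * π / 13) ^ 9 + (-9984) * Real.cos (2 * π / 13) ^ 7 + (2912) * Real.cos (2 * π / 13) ^ 5 + (-364) * Real.cos (2 * π / 13) ^ 3 + (13) * Real.cos (2 * π / 13) = 1 := by rw [← h13, hone]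
  have hQ : (64) * Real.cos (2 * π / 13) ^ 6 + (32) * Real.cos (2 * π / 13) ^ 5 + (-80) * Real.cos (2 * π / 13) ^ 4 + (-32) * Real.cos (2 * π / 13) ^ 3 + (24) * Real.cos (2 * π / 13) ^ 2 + (6) * Real.cos (2 * π / 13) + (-1) = 0 := by
    have hfac : (Real.cos (2 * π / 13) - 1) * ((64) * Real.cos (2 * π / 13) ^ 6 + (32) * Real.cos (2 * π / 13) ^ 5 + (-80) * Real.cos (2 * π / 13) ^ 4 + (-32) * Real.cos (2 * π / 13) ^ 3 + (24) * Real.cos (2 * π / 13) ^ 2 + (6) * Real.cos (2 * π / 13) + (-1)) ^ 2 = 0 := by linear_combination hP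
    have hlt : Real.cos (2 * π / 13) < 1 := by
      have := Real.cos_lt_cos_of_nonneg_of_le_pi (le_refl 0) (by nlinarith [Real.pi_pos]) (show (0:ℝ) < 2 * π / 13 by positivity)
      simpa using this
    rcases mul_eq_zero.mp hfac with h | h
    · exfalso; linarith
    · exact pow_eq_zero_iff (by norm_num) |>.mp h
  have hs : Real.sin (π / 13) ^ 2 = 1/2 - Real.cos (2 * π / 13) / 2 := by
    rw [Real.sin_sq_eq_half_sub, show 2 * (π / 13) = 2 * π / 13 by ring]
  have ht : Real.sin (6 * π / 13) ^ 2 = 1/2 - ((32) * Real.cos (2 * π / 13) ^ 6 + (-48) * Real.cos (2 * π / 13) ^ 4 + (18) * Real.cos (2 * π / 13) ^ 2 + (-1)) / 2 := by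
    rw [Real.sin_sq_eq_half_sub, show 2 * (6 * π / 13) = (6:ℝ) * (2 * π / 13) by ring, h6]
  have htpos : 0 < Real.sin (6 * π / 13) := by
    apply Real.sin_pos_of_pos_of_lt_pi
    · positivity
    · nlinarith [Real.pi_pos]
  have hDne : 1/2 - ((32) * Real.cos (2 * π / 13) ^ 6 + (-48) * Real.cos (2 * π / 13) ^ 4 + (18) * Real.cos (2 * π / 13) ^ 2 + (-1)) / 2 ≠ 0 := by rw [← ht]; positivity
  have hv' : v * (1/2 - ((32) * Real.cos (2 * π / 13) ^ 6 + (-48) * Real.cos (2 * π / 13) ^ 4 + (18) * Real.cos (2 * π / 13) ^ 2 + (-1)) / 2) = (1/2 - Real.cos (2 * π / 13) / 2) := by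
    rw [hv, ← ht, ← hs]
    exact div_mul_cancel₀ _ (ne_of_gt (pow_pos htpos 2))
  have hE : (v ^ 6 - 11 * v ^ 5 + 45 * v ^ 4 - 84 * v ^ 3 + 70 * v ^ 2 - 21 * v + 1) * (1/2 - ((32) * Real.cos (2 * π / 13) ^ 6 + (-48) * Real.cos (2 * π / 13) ^ 4 + (18) * Real.cos (2 * π / 13) ^ 2 + (-1)) / 2) ^ 6 = 0 := by
    linear_combination ((-21) * (1/2 - ((32) * Real.cos (2 * π / 13) ^ 6 + (-48) * Real.cos (2 * π / 13) ^ 4 + (18) * Real.cos (2 * π / 13) ^ 2 + (-1)) / 2) ^ 5 * ((v * (1/2 - ((32) * Real.cos (2 * π / 13) ^ 6 + (-48) * Real.cos (2 * π / 13) ^ 4 + (18) * Real.cos (2 * π / 13) ^ 2 + (-1)) / 2)) ^ 0 * (1/2 - Real.cos (2 * π / 13) / 2) ^ 0) + (70) * (1/2 - ((32) * Real.cos (2 * π / 13) ^ 6 + (-48) * Real.cos (2 * π / 13) ^ 4 + (18) * Real.cos (2 * π / 13) ^ 2 + (-1)) / 2) ^ 4 * ((v * (1/2 - ((32) * Real.cos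 (2 * π / 13) ^ 6 + (-48) * Real.cos (2 * π / 13) ^ 4 + (18) * Real.cos (2 * π / 13) ^ 2 + (-1)) / 2)) ^ 0 * (1/2 - Real.cos (2 * π / 13) / 2) ^ 1 + (v * (1/2 - ((32) * Real.cos (2 * π / 13) ^ 6 + (-48) * Real.cos (2 * π / 13) ^ 4 + (18) * Real.cos (2 * π / 13) ^ 2 + (-1)) / 2)) ^ 1 * (1/2 - Real.cos (2 * π / 13) / 2) ^ 0) + (-84) * (1/2 - ((32) * Real.cos (2 * π / 13) ^ 6 + (-48) * Real.cos (2 * π / 13) ^ 4 + (18) * Real.cos (2 * π / 13) ^ 2 + (-1)) / 2) ^ 3 * ((v * (1/2 - ((32) * Real.cos (2 * π / 13) ^ 6 + (-48) * Real.cos (2 * π / 13) ^ 4 + (18) * Real.cos (2 * π / 13) ^ 2 + (-1)) / 2)) ^ 0 * (1/2 - Real.cos (2 * π / 13) / 2) ^ 2 + (v * (1/2 - ((32) * Real.cos (2 * π / 13) ^ 6 + (-48) * Real.cos (2 * π / 13) ^ 4 + (18) * Real.cos (2 * π / 13) ^ 2 + (-1)) / 2)) ^ 1 * (1/2 - Real.cos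 (2 * π / 13) / 2) ^ 1 + (v * (1/2 - ((32) * Real.cos (2 * π / 13) ^ 6 + (-48) * Real.cos (2 * π / 13) ^ 4 + (18) * Real.cos (2 * π / 13) ^ 2 + (-1)) / 2)) ^ 2 * (1/2 - Real.cos (2 * π / 13) / 2) ^ 0) + (45) * (1/2 - ((32) * Real.cos (2 * π / 13) ^ 6 + (-48) * Real.cos (2 * π / 13) ^ 4 + (18) * Real.cos (2 * π / 13) ^ 2 + (-1)) / 2) ^ 2 * ((v * (1/2 - ((32) * Real.cos (2 * π / 13) ^ 6 + (-48) * Real.cos (2 * π / 13) ^ 4 + (18) * Real.cos (2 * π / 13) ^ 2 + (-1)) / 2)) ^ 0 * (1/2 - Real.cos (2 * π / 13) / 2) ^ 3 + (v * (1/2 - ((32) * Real.cos (2 * π / 13) ^ 6 + (-48) * Real.cos (2 * π / 13) ^ 4 + (18) * Real.cos (2 * π / 13) ^ 2 + (-1)) / 2)) ^ 1 * (1/2 - Real.cos (2 * π / 13) / 2) ^ 2 + (v * (1/2 - ((32) * Real.cos (2 * π / 13) ^ 6 + (-48) * Real.cos (2 * π / 13) ^ 4 + (18) * Real.cos (2 *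 π / 13) ^ 2 + (-1)) / 2)) ^ 2 * (1/2 - Real.cos (2 * π / 13) / 2) ^ 1 + (v * (1/2 - ((32) * Real.cos (2 * π / 13) ^ 6 + (-48) * Real.cos (2 * π / 13) ^ 4 + (18) * Real.cos (2 * π / 13) ^ 2 + (-1)) / 2)) ^ 3 * (1/2 - Real.cos (2 * π / 13) / 2) ^ 0) + (-11) * (1/2 - ((32) * Real.cos (2 * π / 13) ^ 6 + (-48) * Real.cos (2 * π / 13) ^ 4 + (18) * Real.cos (2 * π / 13) ^ 2 + (-1)) / 2) ^ 1 * ((v * (1/2 - ((32) * Real.cos (2 * π / 13) ^ 6 + (-48) * Real.cos (2 * π / 13) ^ 4 + (18) * Real.cos (2 * π / 13) ^ 2 + (-1)) / 2)) ^ 0 * (1/2 - Real.cos (2 * π / 13) / 2) ^ 4 + (v * (1/2 - ((32) * Real.cos (2 * π / 13) ^ 6 + (-48) * Real.cos (2 * π / 13) ^ 4 + (18) * Real.cos (2 * π / 13) ^ 2 + (-1)) / 2)) ^ 1 * (1/2 - Real.cos (2 * π / 13) / 2) ^ 3 + (v * (1/2 - ((32) * Real.cos (2 * π / 13) ^ 6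 + (-48) * Real.cos (2 * π / 13) ^ 4 + (18) * Real.cos (2 * π / 13) ^ 2 + (-1)) / 2)) ^ 2 * (1/2 - Real.cos (2 * π / 13) / 2) ^ 2 + (v * (1/2 - ((32) * Real.cos (2 * π / 13) ^ 6 + (-48) * Real.cos (2 * π / 13) ^ 4 + (18) * Real.cos (2 * π / 13) ^ 2 + (-1)) / 2)) ^ 3 * (1/2 - Real.cos (2 * π / 13) / 2) ^ 1 + (v * (1/2 - ((32) * Real.cos (2 * π / 13) ^ 6 + (-48) * Real.cos (2 * π / 13) ^ 4 + (18) * Real.cos (2 * π / 13) ^ 2 + (-1)) / 2)) ^ 4 * (1/2 - Real.cos (2 * π / 13) / 2) ^ 0) + (1) * (1/2 - ((32) * Real.cos (2 * π / 13) ^ 6 + (-48) * Real.cos (2 * π / 13) ^ 4 + (18) * Real.cos (2 * π / 13) ^ 2 + (-1)) / 2) ^ 0 * ((v * (1/2 - ((32) * Real.cos (2 * π / 13) ^ 6 + (-48) * Real.cos (2 * π / 13) ^ 4 + (18) * Real.cos (2 * π / 13) ^ 2 + (-1)) / 2)) ^ 0 * (1/2 - Real.cos (2 * π / 13) / 2)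 ^ 5 + (v * (1/2 - ((32) * Real.cos (2 * π / 13) ^ 6 + (-48) * Real.cos (2 * π / 13) ^ 4 + (18) * Real.cos (2 * π / 13) ^ 2 + (-1)) / 2)) ^ 1 * (1/2 - Real.cos (2 * π / 13) / 2) ^ 4 + (v * (1/2 - ((32) * Real.cos (2 * π / 13) ^ 6 + (-48) * Real.cos (2 * π / 13) ^ 4 + (18) * Real.cos (2 * π / 13) ^ 2 + (-1)) / 2)) ^ 2 * (1/2 - Real.cos (2 * π / 13) / 2) ^ 3 + (v * (1/2 - ((32) * Real.cos (2 * π / 13) ^ 6 + (-48) * Real.cos (2 * π / 13) ^ 4 + (18) * Real.cos (2 * π / 13) ^ 2 + (-1)) / 2)) ^ 3 * (1/2 - Real.cos (2 * π / 13) / 2) ^ 2 + (v * (1/2 - ((32) * Real.cos (2 * π / 13) ^ 6 + (-48) * Real.cos (2 * π / 13) ^ 4 + (18) * Real.cos (2 * π / 13) ^ 2 + (-1)) / 2)) ^ 4 * (1/2 - Real.cos (2 * π / 13) / 2) ^ 1 + (v * (1/2 - ((32) * Real.cos (2 * π / 13) ^ 6 + (-48) * Real.cos (2 * π / 13) ^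 4 + (18) * Real.cos (2 * π / 13) ^ 2 + (-1)) / 2)) ^ 5 * (1/2 - Real.cos (2 * π / 13) / 2) ^ 0)) * hv' + ((262144) * Real.cos (2 * π / 13) ^ 30 + (-131072) * Real.cos (2 * π / 13) ^ 29 + (-1966080) * Real.cos (2 * π / 13) ^ 28 + (950272) * Real.cos (2 * π / 13) ^ 27 + (6635520) * Real.cos (2 * π / 13) ^ 26 + (-3260416) * Real.cos (2 * π / 13) ^ 25 + (-13103104) * Real.cos (2 * π / 13) ^ 24 + (6909952) * Real.cos (2 * π / 13) ^ 23 + (16432128) * Real.cos (2 * π / 13) ^ 22 + (-9869312) * Real.cos (2 * π / 13) ^ 21 + (-13131776) * Real.cos (2 * π / 13) ^ 20 + (9758592) * Real.cos (2 * π / 13) ^ 19 + (6006400) * Real.cos (2 * π / 13) ^ 18 + (-6640640) * Real.cos (2 * π / 13) ^ 17 + (-595632) * Real.cos (2 * π / 13) ^ 16 + (2986856) * Real.cos (2 * π / 13) ^ 15 + (-1097336) * Real.cos (2 * π / 13) ^ 14 + (-785852) * Real.cos (2 * π / 13) ^ 13 + (773276) * Real.cos (2 * π / 13) ^ 12 +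 (120461/2) * Real.cos (2 * π / 13) ^ 11 + (-260804) * Real.cos (2 * π / 13) ^ 10 + (248403/8) * Real.cos (2 * π / 13) ^ 9 + (808367/16) * Real.cos (2 * π / 13) ^ 8 + (-178363/16) * Real.cos (2 * π / 13) ^ 7 + (-356515/64) * Real.cos (2 * π / 13) ^ 6 + (50879/32) * Real.cos (2 * π / 13) ^ 5 + (20451/64) * Real.cos (2 * π / 13) ^ 4 + (-851/8) * Real.cos (2 * π / 13) ^ 3 + (-477/64) * Real.cos (2 * π / 13) ^ 2 + (87/32) * Real.cos (2 * π / 13) + (1/64)) * hQ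
  exact (mul_eq_zero.mp hE).resolve_right (pow_ne_zero 6 hDne)
end

section
/- The 13 points in R² consisting of the 12 vertices (cos(πk/6), sin(πk/6)), k = 0,...,11, of a regular 12-gon together with its center (0,0) form a 6-distance set: the set of pairwise distances has cardinality exactly 6. -/
/-!
Points of angles `a` and `b` on the unit circle are at distance `2 |sin ((a - b) / 2)|`, so
vertices `j`, `k` of the regular `n`-gon are at distance `2 |sin (π (j - k) / n)|`. As `|sin|`
has period `π` and `sin (π - x) = sin x`, this is a chord length `2 sin (π m / n)` with
`2m ≤ n`, and `m ≠ 0` for distinct vertices; these chord lengths are distinct since `sin`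
is injective on `[0, π / 2]`. Every vertex is at distance `1` from the centre, and for `n = 12`
this is the chord length with `m = 2`, so the 13 points span exactly six distances.
-/

open Real

noncomputable def unitCirclePoint (θ : ℝ) : EuclideanSpace ℝ (Fin 2) := !₂[cos θ, sin θ]

lemma norm_unitCirclePoint (θ : ℝ) : ‖unitCirclePoint θ‖ = 1 := by
  simp [unitCirclePoint, EuclideanSpace.norm_eq, Fin.sum_univ_two]

lemma dist_unitCirclePoint (a b : ℝ) :
    dist (unitCirclePoint a) (unitCirclePoint b) = 2 * |sin ((a - b) / 2)| := by
  have hcos : cos (a - b) = cos ((a - b) / 2) ^ 2 - sin ((a - b) / 2) ^ 2 := by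
    rw [← cos_two_mul', mul_div_cancel₀ _ two_ne_zero]
  have hsq : (cos a - cos b) ^ 2 + (sin a - sin b) ^ 2 = (2 * |sin ((a - b) / 2)|) ^ 2 := by
    rw [mul_pow, sq_abs]
    nlinarith [cos_sub a b, sin_sq_add_cos_sq a, sin_sq_add_cos_sq b,
      sin_sq_add_cos_sq ((a - b) / 2)]
  rw [EuclideanSpace.dist_eq, Fin.sum_univ_two]
  simp only [unitCirclePoint, Real.dist_eq, sq_abs]
  simp [hsq]

lemma abs_sin_pi_mul_int_div (n : ℕ) (d : ℤ) :
    ∃ m : ℕ, 2 * m ≤ n ∧ |sin (π * d / n)| = sin (π * m / n) := by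
  rcases Nat.eq_zero_or_pos n with rfl | hn
  · exact ⟨0, le_rfl, by simp⟩
  obtain ⟨e, he⟩ : ∃ e : ℕ, (e : ℤ) = d % n :=
    ⟨(d % n).toNat, Int.toNat_of_nonneg (Int.emod_nonneg d (by omega))⟩
  have hen : e < n := by
    have := Int.emod_lt_of_pos d (by omega : (0 : ℤ) < n)
    omega
  have hperiod : |sin (π * d / n)| = |sin (π * e / n)| := by
    have hangle : π * d / n = π * e / n + (d / n : ℤ) * π := by
      rw [← Int.cast_natCast e, he, Int.emod_def]
      push_cast
      field_simp
      ring
    rw [hangle, sin_add_int_mul_pi, abs_mul, abs_neg_one_zpow, one_mul]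
  have hnonneg : 0 ≤ sin (π * e / n) := by
    apply sin_nonneg_of_nonneg_of_le_pi (by positivity)
    rw [div_le_iff₀ (by positivity)]
    have : (e : ℝ) ≤ n := by exact_mod_cast hen.le
    nlinarith [pi_pos]
  rw [hperiod, abs_of_nonneg hnonneg]
  by_cases h : 2 * e ≤ n
  · exact ⟨e, h, rfl⟩
  · refine ⟨n - e, by omega, ?_⟩
    rw [Nat.cast_sub hen.le, ← sin_pi_sub]
    congr 1
    field_simp

noncomputable def chordLength (n m : ℕ) : ℝ := 2 * sin (π * m / n)

lemma chordLength_zero (n : ℕ) : chordLength n 0 = 0 := by simp [chordLength]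

lemma chordLength_injOn (n : ℕ) : Set.InjOn (chordLength n) {m | 2 * m ≤ n} := by
  rcases Nat.eq_zero_or_pos n with rfl | hn
  · intro a ha b hb _
    simp_all
  have hmem : ∀ m ∈ {m | 2 * m ≤ n}, π * m / n ∈ Set.Icc (-(π / 2)) (π / 2) := by
    intro m hm
    have : 2 * (m : ℝ) ≤ n := by exact_mod_cast hm
    refine ⟨by linarith [show 0 ≤ π * m / n by positivity, pi_pos], ?_⟩
    rw [div_le_iff₀ (by positivity)]
    nlinarith [pi_pos]
  intro a ha b hb hab
  have := injOn_sin (hmem a ha) (hmem b hb) (by simpa [chordLength] using hab)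
  field_simp at this
  exact_mod_cast this

noncomputable def regularPolygonVertex (n : ℕ) (k : Fin n) : EuclideanSpace ℝ (Fin 2) :=
  unitCirclePoint (2 * π * k / n)

variable {n : ℕ}

lemma dist_regularPolygonVertex (j k : Fin n) :
    dist (regularPolygonVertex n j) (regularPolygonVertex n k) =
      2 * |sin (π * ((j - k : ℤ) : ℝ) / n)| := by
  rw [regularPolygonVertex, regularPolygonVertex, dist_unitCirclePoint]
  congr 3
  push_cast
  ring

lemma exists_dist_regularPolygonVertex_eq_chordLength (j k : Fin n) :
    ∃ m : ℕ, 2 * m ≤ n ∧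
      dist (regularPolygonVertex n j) (regularPolygonVertex n k) = chordLength n m := by
  obtain ⟨m, hm, hsin⟩ := abs_sin_pi_mul_int_div n (j - k)
  exact ⟨m, hm, by rw [dist_regularPolygonVertex, hsin, chordLength]⟩

lemma dist_regularPolygonVertex_zero (m : Fin n) (hm : 2 * (m : ℕ) ≤ n) :
    dist (regularPolygonVertex n m) (regularPolygonVertex n ⟨0, m.pos⟩) =
      chordLength n m := by
  have hm' : 2 * (m : ℝ) ≤ n := by exact_mod_cast hm
  have hnonneg : 0 ≤ sin (π * m / n) := by
    apply sin_nonneg_of_nonneg_of_le_pi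
    · positivity
    rw [div_le_iff₀ (by exact_mod_cast m.pos)]
    nlinarith [pi_pos]
  rw [dist_regularPolygonVertex, chordLength]
  push_cast
  rw [sub_zero, abs_of_nonneg hnonneg]

lemma regularPolygonVertex_injective : Function.Injective (regularPolygonVertex n) := by
  intro j k hjk
  have hsin : sin (π * ((j - k : ℤ) : ℝ) / n) = 0 := by
    simpa [hjk] using (dist_regularPolygonVertex j k).symm
  have hn : (0 : ℝ) < n := by exact_mod_cast j.pos
  have hj : (j : ℝ) < n := by exact_mod_cast j.isLt
  have hk : (k : ℝ) < n := by exact_mod_cast k.isLt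
  push_cast at hsin
  rw [sin_eq_zero_iff_of_lt_of_lt] at hsin
  · have : (j : ℝ) = k := by
      field_simp at hsin
      simpa [pi_ne_zero, sub_eq_zero] using hsin
    exact Fin.ext (by exact_mod_cast this)
  all_goals
    first | rw [lt_div_iff₀ hn] | rw [div_lt_iff₀ hn]
    nlinarith [pi_pos, j.val.cast_nonneg (α := ℝ), k.val.cast_nonneg (α := ℝ)]

lemma norm_regularPolygonVertex (k : Fin n) : ‖regularPolygonVertex n k‖ = 1 :=
  norm_unitCirclePoint _

lemma regularPolygonVertex_ne_zero (k : Fin n) : regularPolygonVertex n k ≠ 0 := by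
  rw [← norm_ne_zero_iff, norm_regularPolygonVertex]
  exact one_ne_zero

def distanceSet {E : Type*} [MetricSpace E] (S : Set E) : Set ℝ :=
  {r | ∃ x ∈ S, ∃ y ∈ S, x ≠ y ∧ dist x y = r}

lemma distanceSet_insert_zero_range_regularPolygonVertex (hn : 0 < n) :
    distanceSet (insert 0 (Set.range (regularPolygonVertex n))) =
      insert 1 (chordLength n '' Set.Icc 1 (n / 2)) := by
  ext r
  constructor
  · rintro ⟨x, hx, y, hy, hxy, rfl⟩
    rcases hx with rfl | ⟨j, rfl⟩ <;> rcases hy with rfl | ⟨k, rfl⟩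
    · exact absurd rfl hxy
    · exact .inl (by rw [dist_zero_left, norm_regularPolygonVertex])
    · exact .inl (by rw [dist_zero_right, norm_regularPolygonVertex])
    · obtain ⟨m, hm, hdist⟩ := exists_dist_regularPolygonVertex_eq_chordLength j k
      have hm0 : m ≠ 0 := by
        rintro rfl
        rw [chordLength_zero, dist_eq_zero] at hdist
        exact hxy hdist
      exact .inr ⟨m, ⟨by omega, (Nat.le_div_iff_mul_le two_pos).2 (by omega)⟩, hdist.symm⟩
  · rintro (rfl | ⟨m, ⟨hm1, hm⟩, rfl⟩)
    · refine ⟨0, .inl rfl, regularPolygonVertex n ⟨0, hn⟩, .inr ⟨_, rfl⟩,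
        (regularPolygonVertex_ne_zero _).symm, ?_⟩
      rw [dist_zero_left, norm_regularPolygonVertex]
    · have hm2 : 2 * m ≤ n := by have := Nat.div_mul_le_self n 2; omega
      refine ⟨regularPolygonVertex n ⟨m, by omega⟩, .inr ⟨_, rfl⟩,
        regularPolygonVertex n ⟨0, hn⟩, .inr ⟨_, rfl⟩, ?_,
        dist_regularPolygonVertex_zero _ hm2⟩
      exact regularPolygonVertex_injective.ne (by simp only [ne_eq, Fin.mk.injEq]; omega)

lemma chordLength_twelve_two : chordLength 12 2 = 1 := by
  have hangle : π * ((2 : ℕ) : ℝ) / (12 : ℕ) = π / 6 := by push_cast; ring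
  rw [chordLength, hangle, sin_pi_div_six]
  norm_num

open Real in
/-- The 12 vertices `(cos(πk/6), sin(πk/6))`, `k = 0, …, 11`, of a regular 12-gon together
with the center `(0,0)` form a 13-point 6-distance set in the plane. -/
theorem regular_12gon_with_center_six_distance (p : Fin 12 → EuclideanSpace ℝ (Fin 2))
    (hp : ∀ k, ∀ i, p k i = ![cos (π * k.val / 6), sin (π * k.val / 6)] i)
    (X : Set (EuclideanSpace ℝ (Fin 2))) (hX : X = insert 0 (Set.range p)) :
    X.ncard = 13 ∧
      ({r : ℝ | ∃ x ∈ X, ∃ y ∈ X, x ≠ y ∧ dist x y = r}).ncard = 6 := by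
  obtain rfl : p = regularPolygonVertex 12 := by
    funext k
    ext i
    fin_cases i <;> simp [hp, regularPolygonVertex, unitCirclePoint] <;> ring_nf
  subst hX
  refine ⟨?_, ?_⟩
  · have hzero : (0 : EuclideanSpace ℝ (Fin 2)) ∉ Set.range (regularPolygonVertex 12) :=
      fun ⟨k, hk⟩ => regularPolygonVertex_ne_zero k hk
    rw [Set.ncard_insert_of_notMem hzero (Set.finite_range _),
      Set.ncard_range_of_injective regularPolygonVertex_injective, Nat.card_fin]
  · change (distanceSet _).ncard = 6
    have hone : (1 : ℝ) ∈ chordLength 12 '' Set.Icc 1 (12 / 2) :=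
      ⟨2, by norm_num, chordLength_twelve_two⟩
    have hsub : Set.Icc 1 (12 / 2) ⊆ {m | 2 * m ≤ 12} := fun m ⟨_, hm⟩ => by
      change 2 * m ≤ 12
      omega
    rw [distanceSet_insert_zero_range_regularPolygonVertex (by norm_num),
      Set.insert_eq_of_mem hone,
      ((chordLength_injOn 12).mono hsub).ncard_image, Set.ncard_Icc_nat]
end
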